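/- If a dynamics f_u on a matrix Lie group G satisfies the group affine property, then the left-invariant error η_t = X_t⁻¹ X̂_t between two trajectories satisfies dη/dt = f_{u_t}(η) − f_{u_t}(I) η. -/

import Mathlib

/-!
Differentiating `η = X⁻¹ X̂` gives `η' = X⁻¹ (f(X̂) - f(X) η)`. Substituting `X̂ = X η` and
expanding `f(X η)` by the group affine property, the terms `f(X) η` cancel and the remaining
factor `X` is absorbed by `X⁻¹`, leaving `f(η) - f(I) η`.
-/

open scoped Ring

def IsGroupAffineOn {R : Type*} [Ring R] (G : Set R) (F : R → R) : Prop :=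
  ∀ a ∈ G, ∀ b ∈ G, F (a * b) = F a * b + a * F b - a * F 1 * b

theorem IsGroupAffineOn.inverse_mul_sub_mul {R : Type*} [Ring R] {G : Set R} {F : R → R}
    (hF : IsGroupAffineOn G F) {a b : R} (ha : a ∈ G) (hb : b ∈ G) (hu : IsUnit a) :
    a⁻¹ʳ * (F (a * b) - F a * b) = F b - F 1 * b := by
  calc a⁻¹ʳ * (F (a * b) - F a * b) = a⁻¹ʳ * (a * (F b - F 1 * b)) := by
        rw [hF a ha b hb]; noncomm_ring
    _ = F b - F 1 * b := Ring.inverse_mul_cancel_left _ _ hu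

section RingInverse

variable {𝕜 R : Type*} [NontriviallyNormedField 𝕜] [NormedRing R] [HasSummableGeomSeries R]
  [NormedAlgebra 𝕜 R] {x y : 𝕜 → R} {x' y' : R} {t : 𝕜}

theorem HasDerivAt.ringInverse (hx : HasDerivAt x x' t) (ht : IsUnit (x t)) :
    HasDerivAt (fun s => (x s)⁻¹ʳ) (-((x t)⁻¹ʳ * x' * (x t)⁻¹ʳ)) t := by
  obtain ⟨u, hu⟩ := ht
  refine ((hasFDerivAt_ringInverse (𝕜 := 𝕜) u).comp_hasDerivAt_of_eq t hx hu).congr_deriv ?_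
  simp [← hu, mul_assoc]

theorem HasDerivAt.ringInverse_mul (hx : HasDerivAt x x' t) (hy : HasDerivAt y y' t)
    (ht : IsUnit (x t)) :
    HasDerivAt (fun s => (x s)⁻¹ʳ * y s) ((x t)⁻¹ʳ * (y' - x' * ((x t)⁻¹ʳ * y t))) t := by
  convert (hx.ringInverse ht).fun_mul hy using 1
  noncomm_ring

end RingInverse

section LinftyOpNorm

/- The entrywise sup norm in force for the theorem is not submultiplicative, so the inverse rule
is applied with the `L∞` operator norm instead; `HasDerivAt` only sees the topology, which is
the product topology for both norms. -/
attribute [local instance] Matrix.linftyOpNormedAddCommGroup Matrix.linftyOpNormedSpace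
  Matrix.linftyOpNormedRing Matrix.linftyOpNormedAlgebra

theorem Matrix.hasDerivAt_ringInverse_mul {n : ℕ} {X Y : ℝ → Matrix (Fin n) (Fin n) ℝ}
    {X' Y' : Matrix (Fin n) (Fin n) ℝ} {t : ℝ} (hX : HasDerivAt X X' t) (hY : HasDerivAt Y Y' t)
    (hu : IsUnit (X t)) :
    HasDerivAt (fun s => (X s)⁻¹ʳ * Y s) ((X t)⁻¹ʳ * (Y' - X' * ((X t)⁻¹ʳ * Y t))) t :=
  hX.ringInverse_mul hY hu

end LinftyOpNorm

theorem left_invariant_error_autonomous_general {n : ℕ}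
    (G : Set (Matrix (Fin n) (Fin n) ℝ))
    (f : ℝ → Matrix (Fin n) (Fin n) ℝ → Matrix (Fin n) (Fin n) ℝ)
    (haff : ∀ t : ℝ, ∀ X₁ ∈ G, ∀ X₂ ∈ G,
      f t (X₁ * X₂) = f t X₁ * X₂ + X₁ * f t X₂ - X₁ * f t 1 * X₂)
    (X Xh : ℝ → Matrix (Fin n) (Fin n) ℝ)
    (hXG : ∀ t, X t ∈ G)
    (hXu : ∀ t, IsUnit (X t))
    (hX : ∀ t, HasDerivAt X (f t (X t)) t)
    (hXh : ∀ t, HasDerivAt Xh (f t (Xh t)) t)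
    (η : ℝ → Matrix (Fin n) (Fin n) ℝ)
    (hη : ∀ t, η t = Ring.inverse (X t) * Xh t)
    (hηG : ∀ t, η t ∈ G) :
    ∀ t, HasDerivAt η (f t (η t) - f t 1 * η t) t := by
  intro t
  have hXh_eq : Xh t = X t * η t := by rw [hη, Ring.mul_inverse_cancel_left _ _ (hXu t)]
  have hcancel := IsGroupAffineOn.inverse_mul_sub_mul (haff t) (hXG t) (hηG t) (hXu t)
  rw [← hXh_eq] at hcancel
  have hderiv := Matrix.hasDerivAt_ringInverse_mul (hX t) (hXh t) (hXu t)
  simp only [← hη] at hderiv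
  rwa [hcancel] at hderiv

/-- Autonomous left-invariant error dynamics for group-affine dynamics:
if f_u is group affine on G and X, X̂ are trajectories of dX/dt = f_{u_t}(X),
then η_t = X_t⁻¹ X̂_t satisfies dη/dt = f_{u_t}(η) − f_{u_t}(I) η,
independently of either trajectory. -/
theorem left_invariant_error_autonomous {n : ℕ}
    (G : Set (Matrix (Fin n) (Fin n) ℝ)) (hG1 : (1 : Matrix (Fin n) (Fin n) ℝ) ∈ G)
    (f : ℝ → Matrix (Fin n) (Fin n) ℝ → Matrix (Fin n) (Fin n) ℝ)
    (haff : ∀ t : ℝ, ∀ X₁ ∈ G, ∀ X₂ ∈ G,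
      f t (X₁ * X₂) = f t X₁ * X₂ + X₁ * f t X₂ - X₁ * f t 1 * X₂)
    (X Xh : ℝ → Matrix (Fin n) (Fin n) ℝ)
    (hXG : ∀ t, X t ∈ G) (hXhG : ∀ t, Xh t ∈ G)
    (hXu : ∀ t, IsUnit (X t))
    (hX : ∀ t, HasDerivAt X (f t (X t)) t)
    (hXh : ∀ t, HasDerivAt Xh (f t (Xh t)) t)
    (η : ℝ → Matrix (Fin n) (Fin n) ℝ)
    (hη : ∀ t, η t = Ring.inverse (X t) * Xh t)
    (hηG : ∀ t, η t ∈ G) :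
    ∀ t, HasDerivAt η (f t (η t) - f t 1 * η t) t :=
  left_invariant_error_autonomous_general G f haff X Xh hXG hXu hX hXh η hη hηG
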